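/- Let n ≥ 1, let β_1,…,β_n > 0 and ω_1,…,ω_n > 0 with Σ_{k=1}^n ω_k = 1, and let λ, r ∈ ℝ. At the maximizing weights π_k = (λ − r)/(β_k)² + ω_k (k = 1,…,n) and π_0 = (r − λ) Σ_{k=1}^n (β_k)^{-2}, the extended-market growth rate equals G(π_0, π) = r + (1/2) Σ_{k=1}^n (θ_k)², where θ_k = (λ − r)/β_k + ω_k β_k is the k-th market price of risk. -/
import Mathlib

open Finset

/-- The growth rate of a portfolio in the extended market (savings account with interest
rate `r` plus `n` atoms), with weight `π0` in the savings account and weights `π` in the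
atoms: `G(π0, π) = λ(1 − π0) + r π0 + Σ_k (β_k)^2 (π_k ω_k − (π_k)^2 / 2)`. -/
noncomputable def extGrowthRate (n : ℕ) (lam r : ℝ) (β ω : Fin n → ℝ)
    (π0 : ℝ) (π : Fin n → ℝ) : ℝ :=
  lam * (1 - π0) + r * π0 + ∑ k, (β k) ^ 2 * (π k * ω k - (π k) ^ 2 / 2)

/-- at the maximizing weights `π_k = (λ − r)/(β_k)^2 + ω_k` and
`π_0 = (r − λ) Σ_k (β_k)^{-2}`, the extended-market growth rate equals
`r + (1/2) Σ_k (θ_k)^2`, where `θ_k = (λ − r)/β_k + ω_k β_k` is the k-th market price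
of risk. -/
theorem extendedMarketGOP_growthRate_eq
    (n : ℕ) (hn : 1 ≤ n) (β ω : Fin n → ℝ)
    (hβ : ∀ k, 0 < β k) (hω : ∀ k, 0 < ω k)
    (hsum : ∑ k, ω k = 1) (lam r : ℝ) :
    extGrowthRate n lam r β ω ((r - lam) * ∑ k, ((β k) ^ 2)⁻¹)
        (fun k => (lam - r) / (β k) ^ 2 + ω k) =
      r + (1 / 2) * ∑ k, ((lam - r) / β k + ω k * β k) ^ 2 := by
  have key : ∀ k, ((lam - r) / β k + ω k * β k) ^ 2 =
      2 * ((β k) ^ 2 * (((lam - r) / (β k) ^ 2 + ω k) * ω k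
        - ((lam - r) / (β k) ^ 2 + ω k) ^ 2 / 2))
      + 2 * (lam - r) ^ 2 * ((β k) ^ 2)⁻¹ + 2 * (lam - r) * ω k := by
    intro k
    have h := (hβ k).ne'
    field_simp
    ring
  simp only [extGrowthRate, key, Finset.sum_add_distrib, ← Finset.mul_sum, hsum]
  ring
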